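/- arXiv:2007.03094 — 6 statements merged into one kernel-verified Lean document; each statement's English description precedes it below -/
import Mathlib

section
/- Let R be a ring and δ a derivation of R. If R is δ-compatible (i.e., for all a, b ∈ R, ab = 0 implies aδ(b) = 0), then for all a, b ∈ R with ab = 0 one has a·δⁿ(b) = 0 and δᵐ(a)·b = 0 for all non-negative integers n and m. -/
/-- Let `R` be a ring and `δ` a derivation of `R` (an additive map
satisfying the Leibniz rule). If `R` is `δ`-compatible (i.e. `a * b = 0` implies
`a * δ b = 0`), then `a * b = 0` implies `a * δ^[n] b = 0` and `δ^[m] a * b = 0`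
for all non-negative integers `n`, `m`. -/
theorem left_and_right_iterated_derivation_annihilate_of_delta_compatible
    {R : Type*} [Ring R] (δ : R → R)
    (hadd : ∀ a b : R, δ (a + b) = δ a + δ b)
    (hleibniz : ∀ a b : R, δ (a * b) = δ a * b + a * δ b)
    (hcompat : ∀ a b : R, a * b = 0 → a * δ b = 0) :
    ∀ a b : R, a * b = 0 → ∀ n m : ℕ, a * δ^[n] b = 0 ∧ δ^[m] a * b = 0 := by
  have hzero : δ 0 = 0 := by
    have := hadd 0 0
    simpa using this
  have hright : ∀ a b : R, a * b = 0 → δ a * b = 0 := by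
    intro a b hab
    have h1 : δ (a * b) = 0 := by rw [hab, hzero]
    have h2 : a * δ b = 0 := hcompat a b hab
    have := hleibniz a b
    rw [h1, h2, add_zero] at this
    exact this.symm
  intro a b hab n m
  constructor
  · induction n with
    | zero => simpa using hab
    | succ k ih =>
      rw [Function.iterate_succ_apply']
      exact hcompat a _ ih
  · induction m with
    | zero => simpa using hab
    | succ k ih =>
      rw [Function.iterate_succ_apply']
      exact hright _ b ih
end

section
/- Let R be a ring, I a subset of R that is left T-nilpotent, and J a two-sided ideal of R that is left T-nilpotent. Then the set I + J = {i + j : i ∈ I, j ∈ J} is left T-nilpotent. -/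
/-- The ordered product `s 0 * s 1 * ⋯ * s n` of the first `n + 1` terms of a sequence. -/
def seqProd {R : Type*} [Mul R] (s : ℕ → R) : ℕ → R
  | 0 => s 0
  | n + 1 => seqProd s n * s (n + 1)

/-- A subset `S` of a ring is left T-nilpotent if for every sequence `s₁, s₂, …` of
elements of `S` there is an integer `k ≥ 1` with `s₁ * s₂ * ⋯ * s_k = 0`. -/
def IsLeftTNilpotent {R : Type*} [Mul R] [Zero R] (S : Set R) : Prop :=
  ∀ s : ℕ → R, (∀ n, s n ∈ S) → ∃ k : ℕ, seqProd s k = 0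

lemma seqProd_congr {R : Type*} [Mul R] {s t : ℕ → R} (h : ∀ n, s n = t n) :
    ∀ k, seqProd s k = seqProd t k
  | 0 => h 0
  | k + 1 => by rw [seqProd, seqProd, seqProd_congr h k, h (k + 1)]

lemma seqProd_split {R : Type*} [Semigroup R] (s : ℕ → R) (a : ℕ) :
    ∀ c, seqProd s (a + 1 + c) = seqProd s a * seqProd (fun m => s (a + 1 + m)) c
  | 0 => rfl
  | c + 1 => by
    have : a + 1 + (c + 1) = (a + 1 + c) + 1 := by omega
    rw [this, seqProd, seqProd_split s a c, seqProd, mul_assoc]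
    rfl

lemma seqProd_sub_mem {R : Type*} [Ring R] (J : TwoSidedIdeal R) (u v : ℕ → R)
    (hv : ∀ n, v n ∈ J) :
    ∀ k, seqProd (fun n => u n + v n) k - seqProd u k ∈ J
  | 0 => by show u 0 + v 0 - u 0 ∈ J; simpa using hv 0
  | k + 1 => by
    have ih := seqProd_sub_mem J u v hv k
    have : seqProd (fun n => u n + v n) (k + 1) - seqProd u (k + 1)
        = (seqProd (fun n => u n + v n) k - seqProd u k) * (u (k + 1) + v (k + 1))
          + seqProd u k * v (k + 1) := by
      simp only [seqProd]; noncomm_ring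
    rw [this]
    exact J.add_mem (J.mul_mem_right _ _ ih) (J.mul_mem_left _ _ (hv (k + 1)))

/-- If `I` is a left T-nilpotent subset of a ring `R` and `J` is a
left T-nilpotent two-sided ideal of `R`, then the set `I + J = {i + j : i ∈ I, j ∈ J}`
is left T-nilpotent. -/
theorem isLeftTNilpotent_set_add_twoSidedIdeal
    {R : Type*} [Ring R] (I : Set R) (J : TwoSidedIdeal R)
    (hI : IsLeftTNilpotent I) (hJ : IsLeftTNilpotent (J : Set R)) :
    IsLeftTNilpotent {x : R | ∃ i ∈ I, ∃ j ∈ J, x = i + j} := by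
  intro s hs
  -- decompose s n = i n + j n
  choose i hiI j hjJ heq using hs
  -- from every starting point, some partial product of the shifted sequence lies in J
  have key : ∀ a : ℕ, ∃ k, seqProd (fun m => s (a + m)) k ∈ J := by
    intro a
    obtain ⟨k, hk⟩ := hI (fun m => i (a + m)) (fun m => hiI (a + m))
    refine ⟨k, ?_⟩
    have h1 : seqProd (fun m => s (a + m)) k
        = seqProd (fun m => i (a + m) + j (a + m)) k :=
      seqProd_congr (fun n => heq (a + n)) k
    have h2 := seqProd_sub_mem J (fun m => i (a + m)) (fun m => j (a + m))
      (fun m => hjJ (a + m)) k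
    rw [hk, sub_zero] at h2
    rwa [h1]
  choose k hk using key
  -- block starting points
  let b : ℕ → ℕ := fun t => Nat.rec 0 (fun _ prev => prev + k prev + 1) t
  -- block products
  let T : ℕ → R := fun t => seqProd (fun m => s (b t + m)) (k (b t))
  have hT : ∀ t, T t ∈ (J : Set R) := fun t => hk (b t)
  obtain ⟨m, hm⟩ := hJ T hT
  have main : ∀ t, seqProd s (b t + k (b t)) = seqProd T t := by
    intro t
    induction t with
    | zero =>
      show seqProd s (0 + k 0) = seqProd (fun m => s (0 + m)) (k 0)
      rw [Nat.zero_add]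
      exact (seqProd_congr (fun n => by rw [Nat.zero_add]) (k 0)).symm
    | succ t ih =>
      have hb : b (t + 1) = b t + k (b t) + 1 := rfl
      have harith : b (t + 1) + k (b (t + 1))
          = (b t + k (b t)) + 1 + k (b (t + 1)) := by omega
      rw [harith, seqProd_split s (b t + k (b t)) (k (b (t + 1))), ih]
      show seqProd T t * seqProd (fun m => s (b (t + 1) + m)) (k (b (t + 1)))
        = seqProd T (t + 1)
      rfl
  exact ⟨b m + k (b m), by rw [main m, hm]⟩
end

section
/- Let R be a ring and J a one-sided (left or right) ideal of R. If J is left T-nilpotent, then the two-sided ideal RJR = {finite sums of elements r·j·r′ with r, r′ ∈ R, j ∈ J} is left T-nilpotent. -/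
/-!
If the partial products `t 0 * ⋯ * t m` of a sequence in the additive closure of `S` never
vanish, then, since the elements `y` with `p * y * t (k+1) * ⋯ * t (k+m) = 0` for some `m` form an
additive subgroup, some `x ∈ S` can replace `t k` without making the products vanish; by dependent
choice this yields a sequence in `S` with non-vanishing partial products. So it suffices to treat
the products `r * j * r'`. Regrouping `x₀ x₁ ⋯ xₙ = (r₀ j₀ r₀')(r₁ j₁ r₁')⋯` as
`(r₀ j₀)(r₀' r₁ j₁)⋯(r'ₙ₋₁ rₙ jₙ) r'ₙ` for a left ideal, or `r₀ (j₀ r₀' r₁)(j₁ r₁' r₂)⋯` for a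
right ideal, turns it into a product of elements of `J`.
-/

section

variable {R : Type*}

theorem seqProd_succ' [Semigroup R] (s : ℕ → R) (n : ℕ) :
    seqProd s (n + 1) = s 0 * seqProd (fun i => s (i + 1)) n := by
  induction n with
  | zero => rfl
  | succ n ih => rw [seqProd, ih, mul_assoc]; rfl

theorem mul_seqProd_eq_zero_of_le [SemigroupWithZero R] {s : ℕ → R} {y : R} {m n : ℕ}
    (hmn : m ≤ n) (h : y * seqProd s m = 0) : y * seqProd s n = 0 := by
  induction n, hmn using Nat.le_induction with
  | base => exact h
  | succ n _ ih => rw [seqProd, ← mul_assoc, ih, zero_mul]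

theorem exists_seq_mem_forall_seqProd [Monoid R] {S : Set R} {P : ℕ → R → Prop} (h0 : P 0 1)
    (hstep : ∀ k p, P k p → ∃ x ∈ S, P (k + 1) (p * x)) :
    ∃ x : ℕ → R, (∀ n, x n ∈ S) ∧ ∀ n, P (n + 1) (seqProd x n) := by
  have hstep' : ∀ k p, ∃ x, P k p → x ∈ S ∧ P (k + 1) (p * x) := by
    intro k p
    by_cases hp : P k p
    · obtain ⟨x, hx⟩ := hstep k p hp
      exact ⟨x, fun _ => hx⟩
    · exact ⟨1, fun h => absurd h hp⟩
  choose f hf using hstep'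
  let q : ℕ → R := fun n => Nat.rec 1 (fun k qk => qk * f k qk) n
  have hq : ∀ n, P n (q n) := fun n => by
    induction n with
    | zero => exact h0
    | succ n ih => exact (hf n (q n) ih).2
  have hprod : ∀ n, seqProd (fun k => f k (q k)) n = q (n + 1) := fun n => by
    induction n with
    | zero => exact (one_mul _).symm
    | succ n ih => rw [seqProd, ih]
  exact ⟨fun k => f k (q k), fun n => (hf n (q n) (hq n)).1, fun n => hprod n ▸ hq (n + 1)⟩

section Closure

variable [NonUnitalRing R]

def eventualLeftAnnihilator (s : ℕ → R) : AddSubgroup R where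
  carrier := {y | ∃ m, y * seqProd s m = 0}
  zero_mem' := ⟨0, zero_mul _⟩
  add_mem' := by
    rintro a b ⟨m, ha⟩ ⟨n, hb⟩
    refine ⟨max m n, ?_⟩
    rw [add_mul, mul_seqProd_eq_zero_of_le (le_max_left m n) ha,
      mul_seqProd_eq_zero_of_le (le_max_right m n) hb, add_zero]
  neg_mem' := by
    rintro a ⟨m, ha⟩
    exact ⟨m, by rw [neg_mul, ha, neg_zero]⟩

@[simp]
theorem mem_eventualLeftAnnihilator {s : ℕ → R} {y : R} :
    y ∈ eventualLeftAnnihilator s ↔ ∃ m, y * seqProd s m = 0 :=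
  Iff.rfl

theorem exists_mem_mul_notMem_eventualLeftAnnihilator {S : Set R} {t : ℕ → R}
    (ht : t 0 ∈ AddSubgroup.closure S) {p : R} (hp : p ∉ eventualLeftAnnihilator t) :
    ∃ x ∈ S, p * x ∉ eventualLeftAnnihilator (fun i => t (i + 1)) := by
  by_contra! h
  have hle : AddSubgroup.closure S ≤
      (eventualLeftAnnihilator fun i => t (i + 1)).comap (AddMonoidHom.mulLeft p) :=
    (AddSubgroup.closure_le _).2 h
  obtain ⟨m, hm⟩ := hle ht
  exact hp ⟨m + 1, by rw [seqProd_succ', ← mul_assoc]; exact hm⟩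

end Closure

theorem IsLeftTNilpotent.addSubgroupClosure [Ring R] {S : Set R} (hS : IsLeftTNilpotent S) :
    IsLeftTNilpotent (AddSubgroup.closure S : Set R) := by
  intro t ht
  by_contra! hne
  have hshift (k : ℕ) : (fun i => t (i + 1 + k)) = fun i => t (i + (k + 1)) := by
    funext i; rw [add_right_comm, add_assoc]
  obtain ⟨x, hxS, hx⟩ := exists_seq_mem_forall_seqProd (S := S)
    (P := fun k p => p ∉ eventualLeftAnnihilator fun i => t (i + k))
    (fun ⟨m, hm⟩ => hne m (by simpa using hm))
    (fun k p hp => by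
      simpa only [hshift] using
        exists_mem_mul_notMem_eventualLeftAnnihilator (t := fun i => t (i + k))
          (by simpa using ht k) hp)
  obtain ⟨n, hn⟩ := hS x hxS
  exact hx n ⟨0, by rw [hn, zero_mul]⟩

section Sandwiches

variable [SemigroupWithZero R] {J : Set R}

def sandwiches (J : Set R) : Set R := {x | ∃ r j r' : R, j ∈ J ∧ x = r * j * r'}

theorem IsLeftTNilpotent.sandwiches_of_mul_left_mem (hL : ∀ r : R, ∀ x ∈ J, r * x ∈ J)
    (hJ : IsLeftTNilpotent J) : IsLeftTNilpotent (sandwiches J) := by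
  intro x hx
  choose r j r' hj hx using hx
  let s : ℕ → R
    | 0 => r 0 * j 0
    | i + 1 => r' i * r (i + 1) * j (i + 1)
  have hsJ : ∀ i, s i ∈ J
    | 0 => hL _ _ (hj 0)
    | i + 1 => hL _ _ (hj (i + 1))
  have hregroup : ∀ n, seqProd s n * r' n = seqProd x n := fun n => by
    induction n with
    | zero => rw [seqProd, seqProd, hx 0]
    | succ n ih =>
      rw [seqProd, seqProd, ← ih, hx (n + 1)]
      simp only [s, mul_assoc]
  obtain ⟨k, hk⟩ := hJ s hsJ
  exact ⟨k, by rw [← hregroup k, hk, zero_mul]⟩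

theorem IsLeftTNilpotent.sandwiches_of_mul_right_mem (hR : ∀ r : R, ∀ x ∈ J, x * r ∈ J)
    (hJ : IsLeftTNilpotent J) : IsLeftTNilpotent (sandwiches J) := by
  intro x hx
  choose r j r' hj hx using hx
  let s : ℕ → R := fun i => j i * (r' i * r (i + 1))
  have hregroup : ∀ n, r 0 * seqProd s n = seqProd x n * r (n + 1) := fun n => by
    induction n with
    | zero => rw [seqProd, seqProd, hx 0]; simp only [s, mul_assoc]
    | succ n ih =>
      rw [seqProd, seqProd, ← mul_assoc, ih, hx (n + 1)]
      simp only [s, mul_assoc]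
  obtain ⟨k, hk⟩ := hJ s fun i => hR _ _ (hj i)
  refine ⟨k + 1, ?_⟩
  calc seqProd x (k + 1) = seqProd x k * r (k + 1) * (j (k + 1) * r' (k + 1)) := by
        rw [seqProd, hx (k + 1)]; simp only [mul_assoc]
    _ = 0 := by rw [← hregroup k, hk, mul_zero, zero_mul]

end Sandwiches

end

/-- Let `J` be a one-sided (left or right) ideal of a ring `R`,
given as an additive subgroup closed under multiplication by `R` on (at least)
one side.  If `J` is left T-nilpotent, then the two-sided ideal
`RJR` (all finite sums of elements `r * j * r'` with `r, r' ∈ R`, `j ∈ J`, which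
is the additive subgroup generated by these products) is left T-nilpotent. -/
theorem isLeftTNilpotent_RJR_of_oneSided
    {R : Type*} [Ring R] (J : AddSubgroup R)
    (hone : (∀ r : R, ∀ x ∈ J, r * x ∈ J) ∨ (∀ r : R, ∀ x ∈ J, x * r ∈ J))
    (hJ : IsLeftTNilpotent (J : Set R)) :
    IsLeftTNilpotent
      ((AddSubgroup.closure {x : R | ∃ r j r' : R, j ∈ J ∧ x = r * j * r'} : AddSubgroup R)
        : Set R) := by
  refine IsLeftTNilpotent.addSubgroupClosure (S := sandwiches (J : Set R)) ?_
  rcases hone with hL | hR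
  · exact hJ.sandwiches_of_mul_left_mem hL
  · exact hJ.sandwiches_of_mul_right_mem hR
end

section
/- Let R be a ring and δ a derivation of R, and assume R is δ-compatible. If a ∈ R is such that the right ideal aR is left T-nilpotent, then δⁱ(a)R is left T-nilpotent for every non-negative integer i. -/
/-- Let `R` be a ring with a derivation `δ`, and assume `R` is
`δ`-compatible.  If `a ∈ R` is such that the right ideal `aR` is left T-nilpotent,
then `δ^[i] a * R` is left T-nilpotent for every non-negative integer `i`. -/
theorem isLeftTNilpotent_iterate_derivation_mul_right
    {R : Type*} [Ring R] (δ : R → R)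
    (hadd : ∀ a b : R, δ (a + b) = δ a + δ b)
    (hleibniz : ∀ a b : R, δ (a * b) = δ a * b + a * δ b)
    (hcompat : ∀ a b : R, a * b = 0 → a * δ b = 0)
    (a : R) (ha : IsLeftTNilpotent (Set.range fun r => a * r)) :
    ∀ i : ℕ, IsLeftTNilpotent (Set.range fun r => δ^[i] a * r) := by
  -- insertion lemma: we may apply δ to a middle factor of a zero product
  have ins : ∀ x y z : R, x * (y * z) = 0 → x * (δ y * z) = 0 := by
    intro x y z h
    have h1 : x * y * δ z = 0 := hcompat (x * y) z (by rw [mul_assoc]; exact h)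
    have h2 : x * δ (y * z) = 0 := hcompat x (y * z) h
    rw [hleibniz, mul_add, ← mul_assoc, ← mul_assoc, h1, add_zero, mul_assoc] at h2
    exact h2
  have insIter : ∀ (i : ℕ) (x y z : R), x * (y * z) = 0 → x * (δ^[i] y * z) = 0 := by
    intro i
    induction i with
    | zero => intro x y z h; simpa using h
    | succ n ih =>
      intro x y z h
      rw [Function.iterate_succ_apply']
      exact ins x (δ^[n] y) z (ih x y z h)
  have key : ∀ (k : ℕ) (r : ℕ → R) (i : ℕ) (c d : R),
      c * seqProd (fun n => a * r n) k * d = 0 →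
      c * seqProd (fun n => δ^[i] a * r n) k * d = 0 := by
    intro k
    induction k with
    | zero =>
      intro r i c d h
      simp only [seqProd, mul_assoc] at h ⊢
      exact insIter i c a (r 0 * d) h
    | succ k ih =>
      intro r i c d h
      simp only [seqProd, mul_assoc] at h ⊢
      have h1 : (c * seqProd (fun n => a * r n) k) * (a * (r (k + 1) * d)) = 0 := by
        rw [mul_assoc]; exact h
      have h2 := insIter i (c * seqProd (fun n => a * r n) k) a (r (k + 1) * d) h1
      have h3 := ih r i c (δ^[i] a * (r (k + 1) * d)) h2
      rw [mul_assoc] at h3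
      exact h3
  intro i s hs
  choose r hr using hs
  obtain ⟨k, hk⟩ := ha (fun n => a * r n) (fun n => ⟨r n, rfl⟩)
  refine ⟨k, ?_⟩
  have hs' : s = fun n => δ^[i] a * r n := funext fun n => (hr n).symm
  rw [hs']
  have := key k r i 1 1 (by simpa using hk)
  simpa using this
end

section
/- Let R be a ring with a derivation δ. Then for every ordinal α, the ideal R^(α) of the upper left annihilator series is a δ-ideal, i.e., δ(R^(α)) ⊆ R^(α). -/
/-! Each `R^(α)` is an additive subgroup closed under right multiplication. At a successor,
if `aR ⊆ R^(α)` then the Leibniz rule writes `δ(a) r = δ(a r) - a δ(r)`, where `δ(a r) ∈ R^(α)`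
by induction and `a δ(r) ∈ R^(α)` by the choice of `a`; limit stages are unions. -/

/-- The upper left annihilator series of a ring `R`:
`R^(0) = 0`, `R^(α+1) = {a ∈ R : a * r ∈ R^(α) for all r ∈ R}`, and
`R^(α) = ⋃_{β < α} R^(β)` at limit ordinals `α`. -/
noncomputable def upperLeftAnnSeries (R : Type*) [Ring R] : Ordinal → Set R :=
  fun α => Ordinal.limitRecOn α
    ({0} : Set R)
    (fun _ S => {a : R | ∀ r : R, a * r ∈ S})
    (fun o _ ih => ⋃ (β : Ordinal) (h : β < o), ih β h)

section UpperLeftAnnSeries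

variable {R : Type*} [Ring R]

theorem upperLeftAnnSeries_zero : upperLeftAnnSeries R 0 = {0} :=
  Ordinal.limitRecOn_zero _ _ _

theorem mem_upperLeftAnnSeries_add_one {α : Ordinal} {a : R} :
    a ∈ upperLeftAnnSeries R (α + 1) ↔ ∀ r : R, a * r ∈ upperLeftAnnSeries R α := by
  rw [upperLeftAnnSeries, Ordinal.limitRecOn_add_one]
  rfl

theorem mem_upperLeftAnnSeries_of_isSuccLimit {α : Ordinal} (hα : Order.IsSuccLimit α) {a : R} :
    a ∈ upperLeftAnnSeries R α ↔ ∃ β < α, a ∈ upperLeftAnnSeries R β := by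
  rw [upperLeftAnnSeries, Ordinal.limitRecOn_limit _ _ _ _ hα]
  simp only [Set.mem_iUnion, exists_prop]
  rfl

theorem mul_mem_upperLeftAnnSeries {α : Ordinal} {a : R} (ha : a ∈ upperLeftAnnSeries R α)
    (r : R) : a * r ∈ upperLeftAnnSeries R α := by
  induction α using Ordinal.limitRecOn generalizing a r with
  | zero =>
    rw [upperLeftAnnSeries_zero, Set.mem_singleton_iff] at ha ⊢
    rw [ha, zero_mul]
  | add_one α _ =>
    rw [mem_upperLeftAnnSeries_add_one] at ha ⊢
    intro s
    rw [mul_assoc]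
    exact ha (r * s)
  | limit α hα ih =>
    rw [mem_upperLeftAnnSeries_of_isSuccLimit hα] at ha ⊢
    obtain ⟨β, hβ, ha⟩ := ha
    exact ⟨β, hβ, ih β hβ ha r⟩

theorem upperLeftAnnSeries_subset_add_one (α : Ordinal) :
    upperLeftAnnSeries R α ⊆ upperLeftAnnSeries R (α + 1) :=
  fun _ ha => mem_upperLeftAnnSeries_add_one.2 (mul_mem_upperLeftAnnSeries ha)

theorem upperLeftAnnSeries_mono : Monotone (upperLeftAnnSeries R) := by
  intro β γ hβγ
  show upperLeftAnnSeries R β ⊆ upperLeftAnnSeries R γ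
  induction γ using Ordinal.limitRecOn generalizing β with
  | zero => rw [nonpos_iff_eq_zero.1 hβγ]
  | add_one γ ih =>
    rcases Order.le_succ_iff_eq_or_le.1 hβγ with rfl | hβγ
    · exact subset_rfl
    · exact (ih hβγ).trans (upperLeftAnnSeries_subset_add_one γ)
  | limit γ hγ _ =>
    rcases hβγ.eq_or_lt with rfl | hβγ
    · exact subset_rfl
    · exact fun _ ha => (mem_upperLeftAnnSeries_of_isSuccLimit hγ).2 ⟨β, hβγ, ha⟩

theorem sub_mem_upperLeftAnnSeries {α : Ordinal} {a b : R} (ha : a ∈ upperLeftAnnSeries R α)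
    (hb : b ∈ upperLeftAnnSeries R α) : a - b ∈ upperLeftAnnSeries R α := by
  induction α using Ordinal.limitRecOn generalizing a b with
  | zero =>
    rw [upperLeftAnnSeries_zero, Set.mem_singleton_iff] at ha hb ⊢
    rw [ha, hb, sub_zero]
  | add_one α ih =>
    rw [mem_upperLeftAnnSeries_add_one] at ha hb ⊢
    intro r
    rw [sub_mul]
    exact ih (ha r) (hb r)
  | limit α hα ih =>
    rw [mem_upperLeftAnnSeries_of_isSuccLimit hα] at ha hb ⊢
    obtain ⟨β, hβ, ha⟩ := ha
    obtain ⟨γ, hγ, hb⟩ := hb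
    have hmax := max_lt hβ hγ
    exact ⟨max β γ, hmax, ih _ hmax (upperLeftAnnSeries_mono (le_max_left β γ) ha)
      (upperLeftAnnSeries_mono (le_max_right β γ) hb)⟩

end UpperLeftAnnSeries

/-- Let `R` be a ring with a derivation `δ`.  Then every member
`R^(α)` of the upper left annihilator series of `R` is a `δ`-ideal, i.e.
`δ(R^(α)) ⊆ R^(α)`. -/
theorem upperLeftAnnSeries_mem_delta_ideal
    {R : Type*} [Ring R] (δ : R → R)
    (hadd : ∀ a b : R, δ (a + b) = δ a + δ b)
    (hleibniz : ∀ a b : R, δ (a * b) = δ a * b + a * δ b) :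
    ∀ α : Ordinal, ∀ a ∈ upperLeftAnnSeries R α, δ a ∈ upperLeftAnnSeries R α := by
  intro α
  induction α using Ordinal.limitRecOn with
  | zero =>
    intro a ha
    rw [upperLeftAnnSeries_zero, Set.mem_singleton_iff] at ha ⊢
    rw [ha]
    exact (AddMonoidHom.mk' δ hadd).map_zero
  | add_one α ih =>
    intro a ha
    rw [mem_upperLeftAnnSeries_add_one] at ha ⊢
    intro r
    rw [eq_sub_of_add_eq (hleibniz a r).symm]
    exact sub_mem_upperLeftAnnSeries (ih _ (ha r)) (ha (δ r))
  | limit α hα ih =>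
    intro a ha
    rw [mem_upperLeftAnnSeries_of_isSuccLimit hα] at ha ⊢
    obtain ⟨β, hβ, ha⟩ := ha
    exact ⟨β, hβ, ih β hβ a ha⟩
end

section
/- Let R be a ring that is left Noetherian or right Noetherian. Then the prime radical of the Laurent series ring R((x)) equals {f ∈ R((x)) : every coefficient of f lies in P(R)}, where P(R) is the prime radical of R; that is, P(R((x))) = P(R)((x)). -/
/-- A two-sided ideal `P` of a ring `S` is prime if it is proper and for all `a, b ∈ S`,
`aSb ⊆ P` implies `a ∈ P` or `b ∈ P`. -/
def IsPrimeTwoSidedIdeal {S : Type*} [Ring S] (P : TwoSidedIdeal S) : Prop :=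
  P ≠ ⊤ ∧ ∀ a b : S, (∀ r : S, a * r * b ∈ P) → a ∈ P ∨ b ∈ P

/-- The prime radical of a ring `S`: the intersection of all prime two-sided ideals. -/
def primeRadicalSet (S : Type*) [Ring S] : Set S :=
  ⋂ P ∈ {P : TwoSidedIdeal S | IsPrimeTwoSidedIdeal P}, (P : Set S)

/-!
If `Q` is a prime ideal of `R`, then `Q((x))` is prime in `R((x))`: for `a, b ∉ Q((x))` take the
lowest indices `m`, `n` with `aₘ, bₙ ∉ Q` and `r ∈ R` with `aₘ r bₙ ∉ Q`; modulo `Q` the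
coefficient of `a r b` at `m + n` is `aₘ r bₙ`. Hence `P(R((x))) ⊆ P(R)((x))`, for any ring.

Conversely, ACC on two-sided ideals makes `P(R)` nilpotent. By Noetherian induction on `I`,
there is an `n` with `Nⁿ ⊆ I` for every ideal `N` lying in all primes over `I`: if `I` is not
prime, there are `a, b ∉ I` with `aRb ⊆ I`, and then `(I + RaR)(I + RbR) ⊆ I`. Since the
coefficients of a product of `n` series in `P(R)((x))` lie in `P(R)ⁿ`, the ideal `P(R)((x))` is
nilpotent as well, so it lies in every prime ideal of `R((x))`.
-/

theorem mem_primeRadicalSet {S : Type*} [Ring S] {x : S} :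
    x ∈ primeRadicalSet S ↔ ∀ P, IsPrimeTwoSidedIdeal P → x ∈ P := by
  simp [primeRadicalSet]

namespace HahnSeries

theorem exists_coeff_notMem_forall_lt_mem {Γ R : Type*} [LinearOrder Γ] [Zero R] {s : Set R}
    (hs : (0 : R) ∈ s) {x : HahnSeries Γ R} (hx : ∃ i, x.coeff i ∉ s) :
    ∃ m, x.coeff m ∉ s ∧ ∀ i < m, x.coeff i ∈ s := by
  have hwf : {i | x.coeff i ∉ s}.IsWF :=
    x.isWF_support.mono fun i hi h0 => hi (h0 ▸ hs)
  exact ⟨hwf.min hx, hwf.min_mem hx, fun i hi => by_contra fun h => hwf.not_lt_min hx h hi⟩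

variable {Γ R : Type*} [AddCommMonoid Γ] [LinearOrder Γ] [IsOrderedCancelAddMonoid Γ]

theorem coeff_mul_add_sub_mul_mem [Ring R] {Q : TwoSidedIdeal R} {x y : HahnSeries Γ R}
    {m n : Γ} (hx : ∀ i < m, x.coeff i ∈ Q) (hy : ∀ j < n, y.coeff j ∈ Q) :
    (x * y).coeff (m + n) - x.coeff m * y.coeff n ∈ Q := by
  classical
  rw [coeff_mul]
  set A := Finset.antidiagonal x.isPWO_support y.isPWO_support (m + n)
  have hrest : ∑ ij ∈ A.erase (m, n), x.coeff ij.1 * y.coeff ij.2 ∈ Q := by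
    refine Q.finsetSum_mem _ _ fun ij hij => ?_
    obtain ⟨hne, hij⟩ := Finset.mem_erase.mp hij
    have hsum : ij.1 + ij.2 = m + n := (Finset.mem_antidiagonal.mp hij).2.2
    rcases lt_or_ge ij.1 m with h | hm
    · exact Q.mul_mem_right _ _ (hx _ h)
    rcases lt_or_ge ij.2 n with h | hn
    · exact Q.mul_mem_left _ _ (hy _ h)
    obtain ⟨h1, h2⟩ := (add_eq_add_iff_eq_and_eq hm hn).mp hsum.symm
    exact absurd (Prod.ext h1.symm h2.symm) hne
  by_cases hmn : (m, n) ∈ A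
  · rwa [Finset.sum_erase_eq_sub hmn] at hrest
  · have hzero : x.coeff m * y.coeff n = 0 := by
      by_contra h
      exact hmn (Finset.mem_antidiagonal.mpr
        ⟨left_ne_zero_of_mul h, right_ne_zero_of_mul h, rfl⟩)
    rwa [hzero, sub_zero, ← Finset.erase_eq_of_notMem hmn]

end HahnSeries

namespace Ideal

variable {R : Type*} [Ring R] (Γ : Type*) [AddCommMonoid Γ] [PartialOrder Γ]
  [IsOrderedCancelAddMonoid Γ]

def hahnSeries (I : Ideal R) : Ideal (HahnSeries Γ R) where
  carrier := {x | ∀ i, x.coeff i ∈ I}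
  zero_mem' _ := I.zero_mem
  add_mem' hx hy i := I.add_mem (hx i) (hy i)
  smul_mem' c x hx i := by
    rw [smul_eq_mul, HahnSeries.coeff_mul]
    exact I.sum_mem fun ij _ => I.mul_mem_left _ (hx ij.2)

variable {Γ} {I J : Ideal R}

@[simp]
theorem mem_hahnSeries {x : HahnSeries Γ R} : x ∈ I.hahnSeries Γ ↔ ∀ i, x.coeff i ∈ I :=
  Iff.rfl

instance [I.IsTwoSided] : (I.hahnSeries Γ).IsTwoSided :=
  ⟨fun y {x} hx i => by
    rw [HahnSeries.coeff_mul]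
    exact I.sum_mem fun ij _ => I.mul_mem_right _ (hx ij.1)⟩

@[simp]
theorem hahnSeries_bot : (⊥ : Ideal R).hahnSeries Γ = ⊥ := by
  ext x
  simp [HahnSeries.ext_iff, funext_iff]

theorem hahnSeries_mul_le : I.hahnSeries Γ * J.hahnSeries Γ ≤ (I * J).hahnSeries Γ :=
  mul_le.mpr fun x hx y hy i => by
    rw [HahnSeries.coeff_mul]
    exact sum_mem _ fun ij _ => mul_mem_mul (hx ij.1) (hy ij.2)

theorem hahnSeries_pow_le : ∀ n : ℕ, I.hahnSeries Γ ^ n ≤ (I ^ n).hahnSeries Γ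
  | 0 => by simp [Submodule.pow_zero, one_eq_top, SetLike.le_def]
  | n + 1 => by
    rw [Submodule.pow_succ, Submodule.pow_succ]
    exact (mul_mono_left (hahnSeries_pow_le n)).trans hahnSeries_mul_le

end Ideal

namespace IsPrimeTwoSidedIdeal

variable {S : Type*} [Ring S] {P : TwoSidedIdeal S}

theorem le_or_le_of_mul_le (hP : IsPrimeTwoSidedIdeal P) {I J : Ideal S} [I.IsTwoSided]
    (h : I * J ≤ P.asIdeal) : I ≤ P.asIdeal ∨ J ≤ P.asIdeal := by
  by_contra! hIJ
  obtain ⟨⟨a, ha, haP⟩, ⟨b, hb, hbP⟩⟩ := And.imp SetLike.not_le_iff_exists.mp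
    SetLike.not_le_iff_exists.mp hIJ
  rcases hP.2 a b fun r => h (Ideal.mul_mem_mul (I.mul_mem_right r ha) hb) with h | h
  exacts [haP h, hbP h]

theorem le_of_pow_le (hP : IsPrimeTwoSidedIdeal P) {I : Ideal S} [I.IsTwoSided] :
    ∀ {n : ℕ}, I ^ n ≤ P.asIdeal → I ≤ P.asIdeal
  | 0, h => by
    rw [Submodule.pow_zero, Ideal.one_eq_top] at h
    exact absurd ((P.one_mem_iff).mp (h Submodule.mem_top)) hP.1
  | n + 1, h => by
    rw [Submodule.pow_succ] at h
    exact (hP.le_or_le_of_mul_le h).elim (hP.le_of_pow_le) id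

variable {Γ : Type*} [AddCommMonoid Γ] [LinearOrder Γ] [IsOrderedCancelAddMonoid Γ]

theorem hahnSeries (hP : IsPrimeTwoSidedIdeal P) :
    IsPrimeTwoSidedIdeal (P.asIdeal.hahnSeries Γ).toTwoSided := by
  refine ⟨fun h => hP.1 ?_, fun x y hxy => ?_⟩
  · have h1 : (1 : HahnSeries Γ S) ∈ (P.asIdeal.hahnSeries Γ).toTwoSided :=
      h ▸ TwoSidedIdeal.mem_top _
    simpa [← P.one_mem_iff] using h1 0
  by_contra! hxy'
  simp only [Ideal.mem_toTwoSided, Ideal.mem_hahnSeries, TwoSidedIdeal.mem_asIdeal, not_forall]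
    at hxy hxy'
  obtain ⟨m, hxm, hx⟩ := HahnSeries.exists_coeff_notMem_forall_lt_mem P.zero_mem hxy'.1
  obtain ⟨n, hyn, hy⟩ := HahnSeries.exists_coeff_notMem_forall_lt_mem P.zero_mem hxy'.2
  obtain ⟨r, hr⟩ : ∃ r, x.coeff m * r * y.coeff n ∉ P := by
    by_contra! h
    exact (hP.2 _ _ h).elim hxm hyn
  have hxr : ∀ i < m, (x * HahnSeries.single 0 r).coeff i ∈ P := fun i hi => by
    simpa [HahnSeries.coeff_mul_single_zero] using P.mul_mem_right _ r (hx i hi)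
  apply hr
  simpa [HahnSeries.coeff_mul_single_zero] using
    P.sub_mem (hxy (HahnSeries.single 0 r) (m + n)) (HahnSeries.coeff_mul_add_sub_mul_mem hxr hy)

end IsPrimeTwoSidedIdeal

namespace TwoSidedIdeal

variable {S : Type*} [Ring S]

theorem mul_mem_of_mem_span_singleton {I : TwoSidedIdeal S} {a b u v : S}
    (hab : ∀ r, a * r * b ∈ I) (hu : u ∈ span {a}) (hv : v ∈ span {b}) : u * v ∈ I := by
  have ha : ∀ w ∈ span {b}, a * w ∈ I := fun w hw => by
    rw [mem_span_iff_mem_addSubgroup_closure] at hw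
    induction hw using AddSubgroup.closure_induction with
    | mem w hw =>
      obtain ⟨_, ⟨s, -, _, rfl, rfl⟩, t, -, rfl⟩ := hw
      simpa only [mul_assoc] using I.mul_mem_right _ t (hab s)
    | zero => simp
    | add w w' _ _ hw hw' => simpa only [mul_add] using I.add_mem hw hw'
    | neg w _ hw => simpa only [mul_neg] using I.neg_mem hw
  rw [mem_span_iff_mem_addSubgroup_closure] at hu
  induction hu using AddSubgroup.closure_induction with
  | mem u hu =>
    obtain ⟨_, ⟨s, -, _, rfl, rfl⟩, t, -, rfl⟩ := hu
    simpa only [mul_assoc] using I.mul_mem_left s _ (ha _ ((span {b}).mul_mem_left t v hv))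
  | zero => simp
  | add u u' _ _ hu hu' => simpa only [add_mul] using I.add_mem hu hu'
  | neg u _ hu => simpa only [neg_mul] using I.neg_mem hu

theorem asIdeal_sup_span_mul_le {I : TwoSidedIdeal S} {a b : S} (hab : ∀ r, a * r * b ∈ I) :
    (I ⊔ span {a}).asIdeal * (I ⊔ span {b}).asIdeal ≤ I.asIdeal := by
  refine Ideal.mul_le.mpr fun u hu v hv => ?_
  obtain ⟨i, hi, u', hu', rfl⟩ := mem_sup.mp (mem_asIdeal.mp hu)
  obtain ⟨j, hj, v', hv', rfl⟩ := mem_sup.mp (mem_asIdeal.mp hv)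
  rw [add_mul, mul_add u', ← add_assoc]
  exact I.add_mem (I.add_mem (I.mul_mem_right _ _ hi) (I.mul_mem_left _ _ hj))
    (mul_mem_of_mem_span_singleton hab hu' hv')

theorem exists_asIdeal_pow_le [WellFoundedGT (TwoSidedIdeal S)] (I : TwoSidedIdeal S) :
    ∃ n : ℕ, ∀ N : TwoSidedIdeal S, (∀ P, IsPrimeTwoSidedIdeal P → I ≤ P → N ≤ P) →
      N.asIdeal ^ n ≤ I.asIdeal := by
  induction I using WellFoundedGT.induction with
  | _ I ih => ?_
  by_cases htop : I = ⊤
  · exact ⟨0, fun N _ => by simp [htop, Submodule.pow_zero, Ideal.one_eq_top]⟩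
  by_cases hprime : IsPrimeTwoSidedIdeal I
  · refine ⟨1, fun N hN => ?_⟩
    simpa [Submodule.pow_one] using asIdeal.monotone (hN I hprime le_rfl)
  obtain ⟨a, b, hab, ha, hb⟩ : ∃ a b, (∀ r, a * r * b ∈ I) ∧ a ∉ I ∧ b ∉ I := by
    simpa [IsPrimeTwoSidedIdeal, htop] using hprime
  have hlt {c : S} (hc : c ∉ I) : I < I ⊔ span {c} :=
    left_lt_sup.mpr fun h => hc (h (subset_span rfl))
  obtain ⟨k, hk⟩ := ih _ (hlt ha)
  obtain ⟨l, hl⟩ := ih _ (hlt hb)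
  refine ⟨k + l, fun N hN => ?_⟩
  have hN' {J : TwoSidedIdeal S} (hIJ : I ≤ J) : ∀ P, IsPrimeTwoSidedIdeal P → J ≤ P → N ≤ P :=
    fun P hP hJP => hN P hP (hIJ.trans hJP)
  calc N.asIdeal ^ (k + l) = N.asIdeal ^ k * N.asIdeal ^ l := Ideal.IsTwoSided.pow_add k l
    _ ≤ (I ⊔ span {a}).asIdeal * (I ⊔ span {b}).asIdeal :=
      Ideal.mul_mono (hk N (hN' le_sup_left)) (hl N (hN' le_sup_left))
    _ ≤ I.asIdeal := asIdeal_sup_span_mul_le hab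

instance wellFoundedGT_of_isNoetherianRing [IsNoetherianRing S] :
    WellFoundedGT (TwoSidedIdeal S) :=
  OrderEmbedding.wellFoundedGT <|
    orderIsoIsTwoSided.toOrderEmbedding.trans (OrderEmbedding.subtype _)

theorem wellFoundedGT_of_isNoetherianRing_mulOpposite [IsNoetherianRing Sᵐᵒᵖ] :
    WellFoundedGT (TwoSidedIdeal S) :=
  OrderEmbedding.wellFoundedGT opOrderIso.toOrderEmbedding

variable (S) in
def primeRadical : TwoSidedIdeal S :=
  sInf {P | IsPrimeTwoSidedIdeal P}

theorem mem_primeRadical {x : S} :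
    x ∈ primeRadical S ↔ ∀ P, IsPrimeTwoSidedIdeal P → x ∈ P :=
  mem_sInf _

theorem exists_primeRadical_pow_eq_bot [WellFoundedGT (TwoSidedIdeal S)] :
    ∃ n : ℕ, (primeRadical S).asIdeal ^ n = ⊥ := by
  obtain ⟨n, hn⟩ := exists_asIdeal_pow_le (⊥ : TwoSidedIdeal S)
  exact ⟨n, le_bot_iff.mp (hn _ fun P hP _ => sInf_le hP)⟩

end TwoSidedIdeal

/-- Let `R` be a left or right Noetherian ring.  Then the prime
radical of the Laurent series ring `R((x))` consists exactly of the Laurent series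
all of whose coefficients lie in the prime radical of `R`:
`P(R((x))) = P(R)((x))`. -/
theorem primeRadical_laurentSeries
    {R : Type*} [Ring R] (hN : IsNoetherianRing R ∨ IsNoetherianRing Rᵐᵒᵖ) :
    primeRadicalSet (LaurentSeries R) =
      {f : LaurentSeries R | ∀ n : ℤ, f.coeff n ∈ primeRadicalSet R} := by
  have : WellFoundedGT (TwoSidedIdeal R) := hN.elim (fun _ => inferInstance)
    fun _ => TwoSidedIdeal.wellFoundedGT_of_isNoetherianRing_mulOpposite
  ext f
  simp only [mem_primeRadicalSet, Set.mem_ofPred_eq]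
  constructor
  · intro hf n Q hQ
    simpa using hf _ hQ.hahnSeries n
  · intro hf P hP
    obtain ⟨k, hk⟩ := TwoSidedIdeal.exists_primeRadical_pow_eq_bot (S := R)
    have hpow : (TwoSidedIdeal.primeRadical R).asIdeal.hahnSeries ℤ ^ k ≤ P.asIdeal :=
      (Ideal.hahnSeries_pow_le k).trans (by simp [hk])
    exact hP.le_of_pow_le hpow fun n => TwoSidedIdeal.mem_primeRadical.mpr (hf n)
end
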